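/- arXiv:1201.6057 — 6 statements merged into one kernel-verified Lean document; each statement's English description precedes it below -/
import Mathlib

section
/- Left-biased choice of strategies is associative: for all strategies s₁, s₂, s₃, term t, and result r, eval (Choice s₁ (Choice s₂ s₃)) t r iff eval (Choice (Choice s₁ s₂) s₃) t r. -/
inductive Term where
  | Node : String → List Term → Term

inductive Strategy where
  | Id : Strategy
  | Fail : Strategy
  | Seq : Strategy → Strategy → Strategy
  | Choice : Strategy → Strategy → Strategy
  | All : Strategy → Strategy
  | One : Strategy → Strategy

inductive eval : Strategy → Term → Option Term → Prop where
  | id : ∀ t, eval .Id t (some t)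
  | fail : ∀ t, eval .Fail t none
  | seq_fail : ∀ {s s' : Strategy} {t : Term},
      eval s t none → eval (.Seq s s') t none
  | seq_ok : ∀ {s s' : Strategy} {t t' : Term} {r : Option Term},
      eval s t (some t') → eval s' t' r → eval (.Seq s s') t r
  | choice_ok : ∀ {s s' : Strategy} {t t' : Term},
      eval s t (some t') → eval (.Choice s s') t (some t')
  | choice_fail : ∀ {s s' : Strategy} {t : Term} {r : Option Term},
      eval s t none → eval s' t r → eval (.Choice s s') t r
  | all_ok : ∀ {s : Strategy} {c : String} {ts ts' : List Term},
      ts'.length = ts.length →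
      (∀ i (hi : i < ts.length) (hi' : i < ts'.length),
        eval s (ts.get ⟨i, hi⟩) (some (ts'.get ⟨i, hi'⟩))) →
      eval (.All s) (.Node c ts) (some (.Node c ts'))
  | all_fail : ∀ {s : Strategy} {c : String} {ts : List Term} {t : Term},
      t ∈ ts → eval s t none → eval (.All s) (.Node c ts) none
  | one_ok : ∀ {s : Strategy} {c : String} {ts : List Term} {t' : Term} {i : ℕ}
      (hi : i < ts.length),
      eval s (ts.get ⟨i, hi⟩) (some t') →
      (∀ j (hj : j < i), eval s (ts.get ⟨j, Nat.lt_trans hj hi⟩) none) →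
      eval (.One s) (.Node c ts) (some (.Node c (ts.set i t')))
  | one_fail : ∀ {s : Strategy} {c : String} {ts : List Term},
      (∀ t ∈ ts, eval s t none) → eval (.One s) (.Node c ts) none

theorem stmt5 : ∀ (s₁ s₂ s₃ : Strategy) (t : Term) (r : Option Term),
    eval (.Choice s₁ (.Choice s₂ s₃)) t r ↔ eval (.Choice (.Choice s₁ s₂) s₃) t r := by
  intro s₁ s₂ s₃ t r
  constructor
  · intro h
    cases h with
    | choice_ok h1 => exact .choice_ok (.choice_ok h1)
    | choice_fail h1 h23 =>
      cases h23 with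
      | choice_ok h2 => exact .choice_ok (.choice_fail h1 h2)
      | choice_fail h2 h3 => exact .choice_fail (.choice_fail h1 h2) h3
  · intro h
    cases h with
    | choice_ok h12 =>
      cases h12 with
      | choice_ok h1 => exact .choice_ok h1
      | choice_fail h1 h2 => exact .choice_fail h1 (.choice_ok h2)
    | choice_fail h12 h3 =>
      cases h12 with
      | choice_fail h1 h2 => exact .choice_fail h1 (.choice_fail h2 h3)
end

section
/- Left distributivity of sequence over choice: for all strategies s₁, s₂, s₃, term t, and result r, eval (Seq s₁ (Choice s₂ s₃)) t r holds iff eval (Choice (Seq s₁ s₂) (Seq s₁ s₃)) t r holds, provided the evaluation of s₁ is deterministic on every term (for all t, r, r', eval s₁ t r and eval s₁ t r' imply r = r'). -/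
theorem stmt6 : ∀ (s₁ s₂ s₃ : Strategy),
    (∀ (t : Term) (r r' : Option Term), eval s₁ t r → eval s₁ t r' → r = r') →
    ∀ (t : Term) (r : Option Term),
      eval (.Seq s₁ (.Choice s₂ s₃)) t r ↔
        eval (.Choice (.Seq s₁ s₂) (.Seq s₁ s₃)) t r := by
  intro s₁ s₂ s₃ hdet t r
  constructor
  · intro h
    cases h with
    | seq_fail h1 => exact .choice_fail (.seq_fail h1) (.seq_fail h1)
    | seq_ok h1 h2 =>
      cases h2 with
      | choice_ok h3 => exact .choice_ok (.seq_ok h1 h3)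
      | choice_fail h3 h4 => exact .choice_fail (.seq_ok h1 h3) (.seq_ok h1 h4)
  · intro h
    cases h with
    | choice_ok h1 =>
      cases h1 with
      | seq_ok h2 h3 => exact .seq_ok h2 (.choice_ok h3)
    | choice_fail h1 h2 =>
      cases h1 with
      | seq_fail h3 =>
        cases h2 with
        | seq_fail _ => exact .seq_fail h3
        | seq_ok h4 _ => exact absurd (hdet _ _ _ h3 h4) (by simp)
      | seq_ok h3 h4 =>
        cases h2 with
        | seq_fail h5 => exact absurd (hdet _ _ _ h3 h5) (by simp)
        | seq_ok h5 h6 =>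
          cases hdet _ _ _ h3 h5
          exact .seq_ok h3 (.choice_fail h4 h6)
end

section
/- The fusion law for 'all': for all strategies s₁, s₂, term t, and result r, eval (Seq (All s₁) (All s₂)) t r holds iff eval (All (Seq s₁ s₂)) t r holds, provided s₁ is deterministic (for all t, r, r', eval s₁ t r and eval s₁ t r' imply r = r'). -/
/-!
Both sides act child by child. On success this is the fact that lifting relations to lists
pointwise commutes with relational composition. On failure, the fused strategy fails at some
child `tᵢ`, either under `s₁` or under `s₂` after `s₁` rewrote `tᵢ` to `u`. In the second case,
unless another child fails under `s₁`, `All s₁` succeeds because evaluation is total, and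
determinism of `s₁` forces its `i`-th result to be `u`, on which `All s₂` then fails.
-/

namespace List

variable {α β γ : Type*} {R : α → β → Prop} {S : β → γ → Prop}

theorem exists_forall₂_of_forall_mem {l : List α} (h : ∀ a ∈ l, ∃ b, R a b) :
    ∃ l', Forall₂ R l l' := by
  induction l with
  | nil => exact ⟨[], .nil⟩
  | cons a l ih =>
    obtain ⟨b, hb⟩ := h a mem_cons_self
    obtain ⟨l', hl'⟩ := ih fun x hx => h x (mem_cons_of_mem a hx)
    exact ⟨b :: l', .cons hb hl'⟩

theorem Forall₂.exists_mem_right {l₁ : List α} {l₂ : List β} (h : Forall₂ R l₁ l₂) {a : α}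
    (ha : a ∈ l₁) : ∃ b ∈ l₂, R a b := by
  induction h with
  | nil => cases ha
  | @cons x y _ _ hxy _ ih =>
    rcases mem_cons.1 ha with rfl | ha
    · exact ⟨y, mem_cons_self, hxy⟩
    · obtain ⟨b, hb, hab⟩ := ih ha
      exact ⟨b, mem_cons_of_mem y hb, hab⟩

theorem Forall₂.exists_mem_left {l₁ : List α} {l₂ : List β} (h : Forall₂ R l₁ l₂) {b : β}
    (hb : b ∈ l₂) : ∃ a ∈ l₁, R a b :=
  (Forall₂.flip (R := _root_.flip R) h).exists_mem_right hb

theorem forall₂_relComp_iff {l₁ : List α} {l₃ : List γ} :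
    Forall₂ (Relation.Comp R S) l₁ l₃ ↔ ∃ l₂, Forall₂ R l₁ l₂ ∧ Forall₂ S l₂ l₃ := by
  constructor
  · intro h
    induction h with
    | nil => exact ⟨[], .nil, .nil⟩
    | cons hac _ ih =>
      obtain ⟨b, hab, hbc⟩ := hac
      obtain ⟨l₂, h₁, h₂⟩ := ih
      exact ⟨b :: l₂, .cons hab h₁, .cons hbc h₂⟩
  · rintro ⟨l₂, h₁, h₂⟩
    induction h₁ generalizing l₃ with
    | nil => cases h₂; exact .nil
    | cons hab _ ih =>
      cases h₂ with
      | cons hbc h₂ => exact .cons ⟨_, hab, hbc⟩ (ih h₂)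

end List

open List

def Strategy.Deterministic (s : Strategy) : Prop :=
  ∀ (t : Term) (r r' : Option Term), eval s t r → eval s t r' → r = r'

theorem eval_seq_some_iff {s s' : Strategy} {t u : Term} :
    eval (.Seq s s') t (some u) ↔ ∃ t', eval s t (some t') ∧ eval s' t' (some u) := by
  constructor
  · intro h
    cases h with
    | seq_ok h h' => exact ⟨_, h, h'⟩
  · rintro ⟨t', h, h'⟩
    exact .seq_ok h h'

theorem eval_seq_none_iff {s s' : Strategy} {t : Term} :
    eval (.Seq s s') t none ↔ eval s t none ∨ ∃ t', eval s t (some t') ∧ eval s' t' none := by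
  constructor
  · intro h
    cases h with
    | seq_fail h => exact .inl h
    | seq_ok h h' => exact .inr ⟨_, h, h'⟩
  · rintro (h | ⟨t', h, h'⟩)
    · exact .seq_fail h
    · exact .seq_ok h h'

theorem eval_all_some_iff {s : Strategy} {c : String} {ts : List Term} {u : Term} :
    eval (.All s) (.Node c ts) (some u) ↔
      ∃ ts', Forall₂ (fun t t' => eval s t (some t')) ts ts' ∧ u = .Node c ts' := by
  constructor
  · intro h
    cases h with
    | all_ok hlen h => exact ⟨_, forall₂_of_length_eq_of_get hlen.symm h, rfl⟩
  · rintro ⟨ts', h, rfl⟩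
    exact .all_ok h.length_eq.symm h.get

theorem eval_all_none_iff {s : Strategy} {c : String} {ts : List Term} :
    eval (.All s) (.Node c ts) none ↔ ∃ t ∈ ts, eval s t none := by
  constructor
  · intro h
    cases h with
    | all_fail ht h => exact ⟨_, ht, h⟩
  · rintro ⟨t, ht, h⟩
    exact .all_fail ht h

theorem eval_total (s : Strategy) (t : Term) : ∃ r, eval s t r := by
  induction s generalizing t with
  | Id => exact ⟨_, .id t⟩
  | Fail => exact ⟨_, .fail t⟩
  | Seq s s' ih ih' =>
    obtain ⟨_ | u, h⟩ := ih t
    · exact ⟨_, .seq_fail h⟩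
    · obtain ⟨r, h'⟩ := ih' u
      exact ⟨r, .seq_ok h h'⟩
  | Choice s s' ih ih' =>
    obtain ⟨_ | u, h⟩ := ih t
    · obtain ⟨r, h'⟩ := ih' t
      exact ⟨r, .choice_fail h h'⟩
    · exact ⟨_, .choice_ok h⟩
  | All s ih =>
    obtain ⟨c, ts⟩ := t
    by_cases hfail : ∃ t ∈ ts, eval s t none
    · exact ⟨none, eval_all_none_iff.2 hfail⟩
    · have hok : ∀ t ∈ ts, ∃ u, eval s t (some u) := fun t ht => by
        obtain ⟨_ | u, h⟩ := ih t
        · exact absurd ⟨t, ht, h⟩ hfail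
        · exact ⟨u, h⟩
      obtain ⟨ts', h⟩ := exists_forall₂_of_forall_mem hok
      exact ⟨_, eval_all_some_iff.2 ⟨ts', h, rfl⟩⟩
  | One s ih =>
    obtain ⟨c, ts⟩ := t
    by_cases hfail : ∀ t ∈ ts, eval s t none
    · exact ⟨none, .one_fail hfail⟩
    · classical
      have hex : ∃ i, ∃ hi : i < ts.length, ¬eval s (ts.get ⟨i, hi⟩) none := by
        push Not at hfail
        obtain ⟨t, ht, h⟩ := hfail
        obtain ⟨i, rfl⟩ := mem_iff_get.1 ht
        exact ⟨i, i.2, h⟩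
      obtain ⟨hi, hnone⟩ := Nat.find_spec hex
      obtain ⟨_ | u, hu⟩ := ih (ts.get ⟨_, hi⟩)
      · exact absurd hu hnone
      · refine ⟨_, .one_ok hi hu fun j hj => ?_⟩
        by_contra hj'
        exact Nat.find_min hex hj ⟨_, hj'⟩

theorem eval_seq_all_all_some_iff (s₁ s₂ : Strategy) (t u : Term) :
    eval (.Seq (.All s₁) (.All s₂)) t (some u) ↔ eval (.All (.Seq s₁ s₂)) t (some u) := by
  obtain ⟨c, ts⟩ := t
  rw [eval_seq_some_iff]
  constructor
  · rintro ⟨_, h₁, h₂⟩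
    obtain ⟨ts', hts', rfl⟩ := eval_all_some_iff.1 h₁
    obtain ⟨ts'', hts'', rfl⟩ := eval_all_some_iff.1 h₂
    have h : Forall₂ (Relation.Comp _ _) ts ts'' := forall₂_relComp_iff.2 ⟨ts', hts', hts''⟩
    exact eval_all_some_iff.2 ⟨ts'', h.imp fun _ _ => eval_seq_some_iff.2, rfl⟩
  · intro h
    obtain ⟨ts'', hts'', rfl⟩ := eval_all_some_iff.1 h
    obtain ⟨ts', h₁, h₂⟩ := forall₂_relComp_iff.1 (hts''.imp fun _ _ => eval_seq_some_iff.1)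
    exact ⟨_, eval_all_some_iff.2 ⟨ts', h₁, rfl⟩, eval_all_some_iff.2 ⟨ts'', h₂, rfl⟩⟩

theorem eval_seq_all_all_none_iff {s₁ : Strategy} (hs₁ : s₁.Deterministic) (s₂ : Strategy)
    (t : Term) : eval (.Seq (.All s₁) (.All s₂)) t none ↔ eval (.All (.Seq s₁ s₂)) t none := by
  obtain ⟨c, ts⟩ := t
  rw [eval_seq_none_iff, eval_all_none_iff (s := .Seq s₁ s₂)]
  constructor
  · rintro (h | ⟨_, h₁, h₂⟩)
    · obtain ⟨t, ht, h⟩ := eval_all_none_iff.1 h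
      exact ⟨t, ht, .seq_fail h⟩
    · obtain ⟨ts', hts', rfl⟩ := eval_all_some_iff.1 h₁
      obtain ⟨u, hu, hfail⟩ := eval_all_none_iff.1 h₂
      obtain ⟨t, ht, htu⟩ := hts'.exists_mem_left hu
      exact ⟨t, ht, .seq_ok htu hfail⟩
  · rintro ⟨t, ht, h⟩
    obtain ⟨_ | _, hall⟩ := eval_total (.All s₁) (.Node c ts)
    · exact .inl hall
    · obtain ⟨ts', hts', rfl⟩ := eval_all_some_iff.1 hall
      obtain ⟨u, hu, htu⟩ := hts'.exists_mem_right ht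
      refine .inr ⟨_, hall, eval_all_none_iff.2 ⟨u, hu, ?_⟩⟩
      rcases eval_seq_none_iff.1 h with h₁ | ⟨u', h₁, h₂⟩
      · cases hs₁ _ _ _ h₁ htu
      · cases hs₁ _ _ _ h₁ htu
        exact h₂

theorem stmt9 : ∀ (s₁ s₂ : Strategy),
    (∀ (t : Term) (r r' : Option Term), eval s₁ t r → eval s₁ t r' → r = r') →
    ∀ (t : Term) (r : Option Term),
      eval (.Seq (.All s₁) (.All s₂)) t r ↔ eval (.All (.Seq s₁ s₂)) t r := by
  rintro s₁ s₂ hs₁ t (_ | u)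
  · exact eval_seq_all_all_none_iff hs₁ s₂ t
  · exact eval_seq_all_all_some_iff s₁ s₂ t u
end

section
/- Every recursion-free strategy terminates (is total): for every strategy s built from Id, Fail, Seq, Choice, All, One and every term t, there exists a result r (either none or some t') such that eval s t r. -/
/-! Structural induction on the strategy. Since `eval` is total on the immediate subterms, excluded
middle decides whether `s` fails on some child (for `All`) or on all children (for `One`); otherwise
`One` rewrites the least index where `s` does not fail, found with `Nat.find`. -/

theorem List.exists_forall₂_of_forall_exists {α β : Type*} {R : α → β → Prop} :
    ∀ {l : List α}, (∀ a ∈ l, ∃ b, R a b) → ∃ l', List.Forall₂ R l l'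
  | [], _ => ⟨[], .nil⟩
  | a :: l, h => by
    obtain ⟨b, hb⟩ := h a List.mem_cons_self
    obtain ⟨l', hl'⟩ :=
      exists_forall₂_of_forall_exists fun x hx => h x (List.mem_cons_of_mem a hx)
    exact ⟨b :: l', .cons hb hl'⟩

namespace Strategy

def Total (s : Strategy) : Prop := ∀ t, ∃ r, eval s t r

theorem total_id : Total .Id := fun t => ⟨_, .id t⟩

theorem total_fail : Total .Fail := fun t => ⟨_, .fail t⟩

variable {s s' : Strategy}

theorem Total.seq (hs : Total s) (hs' : Total s') : Total (.Seq s s') := by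
  intro t
  obtain ⟨r, hr⟩ := hs t
  cases r with
  | none => exact ⟨none, .seq_fail hr⟩
  | some t' =>
    obtain ⟨r', hr'⟩ := hs' t'
    exact ⟨r', .seq_ok hr hr'⟩

theorem Total.choice (hs : Total s) (hs' : Total s') : Total (.Choice s s') := by
  intro t
  obtain ⟨r, hr⟩ := hs t
  cases r with
  | none =>
    obtain ⟨r', hr'⟩ := hs' t
    exact ⟨r', .choice_fail hr hr'⟩
  | some t' => exact ⟨some t', .choice_ok hr⟩

theorem Total.exists_some (hs : Total s) {t : Term} (ht : ¬ eval s t none) :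
    ∃ t', eval s t (some t') := by
  obtain ⟨r, hr⟩ := hs t
  exact (Option.exists.mp ⟨r, hr⟩).resolve_left ht

theorem eval_all_some {c : String} {ts ts' : List Term}
    (h : List.Forall₂ (fun t t' => eval s t (some t')) ts ts') :
    eval (.All s) (.Node c ts) (some (.Node c ts')) :=
  have ⟨hlen, hget⟩ := List.forall₂_iff_get.mp h
  .all_ok hlen.symm hget

theorem Total.all (hs : Total s) : Total (.All s) := by
  rintro ⟨c, ts⟩
  by_cases hfail : ∃ t ∈ ts, eval s t none
  · obtain ⟨t, ht, hnone⟩ := hfail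
    exact ⟨none, .all_fail ht hnone⟩
  · push Not at hfail
    obtain ⟨ts', hts'⟩ :=
      List.exists_forall₂_of_forall_exists fun t ht => hs.exists_some (hfail t ht)
    exact ⟨_, eval_all_some hts'⟩

theorem Total.one (hs : Total s) : Total (.One s) := by
  classical
  rintro ⟨c, ts⟩
  by_cases hfail : ∀ t ∈ ts, eval s t none
  · exact ⟨none, .one_fail hfail⟩
  · have hex : ∃ i, ∃ hi : i < ts.length, ¬ eval s (ts.get ⟨i, hi⟩) none := by
      push Not at hfail
      obtain ⟨t, ht, hnone⟩ := hfail
      obtain ⟨i, rfl⟩ := List.get_of_mem ht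
      exact ⟨i, i.2, hnone⟩
    obtain ⟨hi, hnone⟩ := Nat.find_spec hex
    obtain ⟨t', ht'⟩ := hs.exists_some hnone
    exact ⟨_, .one_ok hi ht' fun j hj =>
      not_not.mp (not_exists.mp (Nat.find_min hex hj) (hj.trans hi))⟩

end Strategy

open Strategy in
theorem stmt15 : ∀ (s : Strategy) (t : Term), ∃ r : Option Term, eval s t r := by
  intro s
  induction s with
  | Id => exact total_id
  | Fail => exact total_fail
  | Seq _ _ ih ih' => exact Total.seq ih ih'
  | Choice _ _ ih ih' => exact Total.choice ih ih'
  | All _ ih => exact Total.all ih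
  | One _ ih => exact Total.one ih
end

section
/- Infallibility soundness for the success/failure type system: if the typing judgement assigns type True (infallible) to a closed recursion-free strategy s, then for no term t does eval s t none hold. -/
def sfType : Strategy → Bool
  | .Id => true
  | .Fail => false
  | .Seq s s' => sfType s && sfType s'
  | .Choice s s' => sfType s || sfType s'
  | .All s => sfType s
  | .One _ => false

theorem stmt16 : ∀ (s : Strategy), sfType s = true → ∀ t : Term, ¬ eval s t none := by
  intro s
  induction s with
  | Id => intro _ t h; cases h
  | Fail => intro h; simp [sfType] at h
  | Seq s s' ih ih' =>
    intro hty t h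
    simp [sfType] at hty
    cases h with
    | seq_fail h1 => exact ih hty.1 _ h1
    | seq_ok h1 h2 => exact ih' hty.2 _ h2
  | Choice s s' ih ih' =>
    intro hty t h
    simp [sfType] at hty
    cases h with
    | choice_fail h1 h2 =>
      cases hty with
      | inl h => exact ih h _ h1
      | inr h => exact ih' h _ h2
  | All s ih =>
    intro hty t h
    cases h with
    | all_fail hmem h1 => exact ih hty _ h1
  | One s ih => intro h; simp [sfType] at h
end

section
/- The bogus stop-bottom-up scheme is the deep identity: define stop_bu(s) recursively as Choice (All (stop_bu s)) s; then for every strategy s and every term t, stop_bu(s) applied to t evaluates to some t, and to no other result. -/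
inductive evalStopBu (s : Strategy) : Term → Option Term → Prop where
  | all_ok : ∀ {c : String} {ts ts' : List Term},
      ts'.length = ts.length →
      (∀ i (hi : i < ts.length) (hi' : i < ts'.length),
        evalStopBu s (ts.get ⟨i, hi⟩) (some (ts'.get ⟨i, hi'⟩))) →
      evalStopBu s (.Node c ts) (some (.Node c ts'))
  | all_fail : ∀ {c : String} {ts : List Term} {t : Term} {r : Option Term},
      t ∈ ts → evalStopBu s t none →
      eval s (.Node c ts) r →
      evalStopBu s (.Node c ts) r

/-! Since `All` succeeds on every constant, induction on terms shows that the `All` branch of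
`stop_bu s` always succeeds and rebuilds its input; conversely, induction on derivations shows
that every result is the input, so the `s` fallback is never reached. -/

theorem Term.induction_on_mem {P : Term → Prop}
    (node : ∀ c ts, (∀ t ∈ ts, P t) → P (.Node c ts)) (t : Term) : P t :=
  Term.rec (motive_2 := fun ts => ∀ t ∈ ts, P t) node (by simp)
    (fun _ _ hhd htl => List.forall_mem_cons.2 ⟨hhd, htl⟩) t

namespace evalStopBu

variable {s : Strategy}

theorem refl (t : Term) : evalStopBu s t (some t) :=
  t.induction_on_mem (P := fun t => evalStopBu s t (some t)) fun _ ts ih =>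
    evalStopBu.all_ok rfl fun i hi _ => ih _ (ts.get_mem ⟨i, hi⟩)

theorem eq_some {t : Term} {r : Option Term} (h : evalStopBu s t r) : r = some t := by
  induction h with
  | all_ok hlen _ ih =>
    congr 2
    exact List.ext_get hlen fun i hi' hi => Option.some_injective _ (ih i hi hi')
  | all_fail _ _ _ ih => nomatch ih

end evalStopBu

theorem stmt18 : ∀ (s : Strategy) (t : Term),
    evalStopBu s t (some t) ∧ ∀ r : Option Term, evalStopBu s t r → r = some t :=
  fun _ t => ⟨.refl t, fun _ => evalStopBu.eq_some⟩
end
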